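/- Let w = s_1 s_2 s_3 s_5 s_4 s_2 s_1 in the Weyl group of E6. Then for every integer p, w((p−3)ω_1 + ρ − p(α_1+α_2+α_3+α_4+α_5)) = (p−5)ω_1 + ω_6 + ρ. Thus the contribution of the root α_1+α_2+α_3+α_4+α_5 to the Jantzen sum for (p−3)ω_1 is −χ((p−5)ω_1+ω_6). -/

import Mathlib

noncomputable section
open scoped BigOperators

/-- The ambient Euclidean space ℝ^8 -/
abbrev V8 := Fin 8 → ℝ

/-- Standard dot product on ℝ^8. -/
def dot (x y : V8) : ℝ := ∑ i, x i * y i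

/-- Standard basis vector e_i. -/
def e (i : Fin 8) : V8 := fun j => if j = i then 1 else 0

/-- The E6 root set: all ±e_i ± e_j for 4 ≤ i < j ≤ 8 (1-based; here indices 3 ≤ i < j ≤ 7)
together with all ±(1/2)[(e_1−e_2−e_3)+Σ_{i=5}^8 ±e_i] with an even number of minus signs
among the last four coordinates. -/
def E6Root : Set V8 :=
  {v | ∃ i j : Fin 8, 3 ≤ (i : ℕ) ∧ i < j ∧
      (v = e i + e j ∨ v = e i - e j ∨ v = -e i + e j ∨ v = -e i - e j)} ∪
  {v | ∃ σ : ℝ, ∃ ε : Fin 4 → ℝ, (σ = 1 ∨ σ = -1) ∧ (∀ k, ε k = 1 ∨ ε k = -1) ∧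
      (∏ k, ε k) = 1 ∧
      v = σ • ((1/2 : ℝ) •
        (e 0 - e 1 - e 2 + ∑ k : Fin 4, ε k • e (⟨4 + (k : ℕ), by have := k.isLt; omega⟩ : Fin 8)))}

/-- The fundamental roots α_1,…,α_6 of E6 (0-indexed). -/
def sroot : Fin 6 → V8 :=
  ![e 3 - e 4, e 4 - e 5, e 5 - e 6, e 6 + e 7, e 6 - e 7,
    (1/2 : ℝ) • (e 0 - e 1 - e 2 - e 3 - e 4 - e 5 - e 6 + e 7)]

/-- The fundamental weights ω_1,…,ω_6 of E6 (0-indexed), in coordinates. -/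
def fweight : Fin 6 → V8 :=
  ![![1/3, -1/3, -1/3, 1, 0, 0, 0, 0],
    ![2/3, -2/3, -2/3, 1, 1, 0, 0, 0],
    ![1, -1, -1, 1, 1, 1, 0, 0],
    ![1/2, -1/2, -1/2, 1/2, 1/2, 1/2, 1/2, 1/2],
    ![5/6, -5/6, -5/6, 1/2, 1/2, 1/2, 1/2, -1/2],
    ![2/3, -2/3, -2/3, 0, 0, 0, 0, 0]]

/-- Half-sum of positive roots, i.e. the sum of the fundamental weights. -/
def rho : V8 := ∑ i, fweight i

/-- A weight given by its coordinates with respect to the fundamental weights. -/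
def wcoord (a : Fin 6 → ℝ) : V8 := ∑ i, a i • fweight i

/-- A vector given by its coordinates with respect to the fundamental roots. -/
def rcoord (c : Fin 6 → ℝ) : V8 := ∑ i, c i • sroot i

/-- The positive roots: elements of the root set that are nonnegative integer
combinations of the fundamental roots. -/
def PosRoot : Set V8 :=
  {β | β ∈ E6Root ∧ ∃ c : Fin 6 → ℕ, β = ∑ i, (c i : ℝ) • sroot i}

/-- The simple reflection in the simple root α_i (roots have squared norm 2). -/
def srefl (i : Fin 6) : V8 → V8 := fun v => v - (dot v (sroot i)) • sroot i

/-- Membership in the Weyl group: a composition of simple reflections. -/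
def IsWeyl (w : V8 → V8) : Prop :=
  w ∈ Submonoid.closure (M := Function.End V8) (Set.range (fun i => (srefl i : Function.End V8)))

/-- Length of a Weyl group element (as a map), as the number of positive roots
sent to negative roots. -/
def wlen (w : V8 → V8) : ℕ := Set.ncard {β | β ∈ PosRoot ∧ w β ∉ PosRoot}

/-- w = s_1 s_2 s_3 s_5 s_4 s_2 s_1 (0-indexed: 0 1 2 4 3 1 0). -/
def w10 : V8 → V8 :=
  srefl 0 ∘ srefl 1 ∘ srefl 2 ∘ srefl 4 ∘ srefl 3 ∘ srefl 1 ∘ srefl 0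


/-! The simple reflections s₁, s₂, s₃, s₅ are reflections in roots `e i - e j`, i.e. coordinate
transpositions, and s₄ is the reflection in `e 6 + e 7`, a transposition with sign change. Hence
`w v = (v₀, v₁, v₂, -v₆, v₄, v₅, v₃, -v₇)`, and the identity becomes a coordinate check using
`ρ = (4, -4, -4, 4, 3, 2, 1, 0)` and `α₁ + ⋯ + α₅ = e 3 + e 6`. -/

lemma dot_e_right (v : V8) (i : Fin 8) : dot v (e i) = v i := by
  simp [dot, e]

lemma dot_add_right (v x y : V8) : dot v (x + y) = dot v x + dot v y := by
  simp [dot, mul_add, Finset.sum_add_distrib]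

lemma dot_sub_right (v x y : V8) : dot v (x - y) = dot v x - dot v y := by
  simp [dot, mul_sub, Finset.sum_sub_distrib]

lemma reflect_e_sub_e_eq_comp_swap (v : V8) {a b : Fin 8} (hab : a ≠ b) :
    v - dot v (e a - e b) • (e a - e b) = v ∘ Equiv.swap a b := by
  funext k
  rw [dot_sub_right, dot_e_right, dot_e_right]
  by_cases hka : k = a
  · subst hka; simp [e, hab]
  by_cases hkb : k = b
  · subst hkb; simp [e, Ne.symm hab]
  · simp [e, hka, hkb, Equiv.swap_apply_of_ne_of_ne]

lemma reflect_e_add_e (v : V8) {a b : Fin 8} (hab : a ≠ b) :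
    v - dot v (e a + e b) • (e a + e b) =
      fun k => if k = a ∨ k = b then -v (Equiv.swap a b k) else v k := by
  funext k
  rw [dot_add_right, dot_e_right, dot_e_right]
  by_cases hka : k = a
  · subst hka; simp [e, hab]
  by_cases hkb : k = b
  · subst hkb; simp [e, Ne.symm hab]
  · simp [e, hka, hkb]

lemma w10_apply (v : V8) : w10 v = ![v 0, v 1, v 2, -v 6, v 4, v 5, v 3, -v 7] := by
  have hs0 : ∀ u, srefl 0 u = u ∘ Equiv.swap 3 4 := fun u => reflect_e_sub_e_eq_comp_swap u (by decide)
  have hs1 : ∀ u, srefl 1 u = u ∘ Equiv.swap 4 5 := fun u => reflect_e_sub_e_eq_comp_swap u (by decide)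
  have hs2 : ∀ u, srefl 2 u = u ∘ Equiv.swap 5 6 := fun u => reflect_e_sub_e_eq_comp_swap u (by decide)
  have hs4 : ∀ u, srefl 4 u = u ∘ Equiv.swap 6 7 := fun u => reflect_e_sub_e_eq_comp_swap u (by decide)
  have hs3 : ∀ u, srefl 3 u = fun k => if k = 6 ∨ k = 7 then -u (Equiv.swap 6 7 k) else u k :=
    fun u => reflect_e_add_e u (by decide)
  funext k
  simp only [w10, Function.comp_apply, hs0, hs1, hs2, hs3, hs4]
  fin_cases k <;> simp [Equiv.swap_apply_of_ne_of_ne]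

lemma rho_eq : rho = ![4, -4, -4, 4, 3, 2, 1, 0] := by
  funext k
  fin_cases k <;> simp [rho, fweight, Fin.sum_univ_succ] <;> norm_num

lemma rcoord_eq : rcoord ![1, 1, 1, 1, 1, 0] = e 3 + e 6 := by
  simp [rcoord, Fin.sum_univ_succ, sroot]
  abel

theorem e6_contribution_pminus5_omega6 :
    ∀ p : ℤ,
      w10 (((p : ℝ) - 3) • fweight 0 + rho - (p : ℝ) • rcoord ![1,1,1,1,1,0]) =
        ((p : ℝ) - 5) • fweight 0 + fweight 5 + rho := by
  intro p
  rw [w10_apply, rho_eq, rcoord_eq]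
  funext k
  fin_cases k <;> simp [fweight, e] <;> ring
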